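/- arXiv:2511.00007 — 6 statements merged into one kernel-verified Lean document; each statement's English description precedes it below -/
import Mathlib

section
/- Let e be a real number with 0 < e < 1, and let l, f be positive reals. Set a := m + f and b := a·√(1 − e²) for a real m with m + f > 0. Then the point (m, l/2) lies on the ellipse x²/a² + y²/b² = 1 (i.e. m²/a² + (l/2)²/b² = 1) if and only if m = l²/(8·f·(1 − e²)) − f/2. Consequently the ellipse of eccentricity e passing through (m, l/2), (m, −l/2) and the vertex (a, 0), with a = m + f, is uniquely determined by e, l and f, with a = l²/(8·f·(1 − e²)) + f/2. -/
/-- For `0 < e < 1` and positive `l`, `f`, with `a = m + f > 0` and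
`b = a·√(1 - e²)`, the point `(m, l/2)` lies on the ellipse `x²/a² + y²/b² = 1`
iff `m = l²/(8·f·(1 - e²)) - f/2`; consequently `a = l²/(8·f·(1 - e²)) + f/2`,
so the ellipse is uniquely determined by `e`, `l`, `f`. -/
theorem ellipse_arc_unique (e l f m : ℝ) (he0 : 0 < e) (he1 : e < 1)
    (hl : 0 < l) (hf : 0 < f) (ha : 0 < m + f) :
    (m ^ 2 / (m + f) ^ 2 + (l / 2) ^ 2 / ((m + f) * Real.sqrt (1 - e ^ 2)) ^ 2 = 1 ↔
      m = l ^ 2 / (8 * f * (1 - e ^ 2)) - f / 2) ∧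
    (m = l ^ 2 / (8 * f * (1 - e ^ 2)) - f / 2 →
      m + f = l ^ 2 / (8 * f * (1 - e ^ 2)) + f / 2) := by
  have hs : (0:ℝ) < 1 - e ^ 2 := by nlinarith
  have hsq : Real.sqrt (1 - e ^ 2) ^ 2 = 1 - e ^ 2 := Real.sq_sqrt hs.le
  constructor
  · rw [mul_pow, hsq]
    rw [div_add_div _ _ (by positivity) (by positivity), div_eq_one_iff_eq (by positivity)]
    constructor
    · intro h
      have h' : m ^ 2 * (1 - e ^ 2) + (l / 2) ^ 2 = (m + f) ^ 2 * (1 - e ^ 2) := by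
        have h2 : (m + f) ^ 2 * (m ^ 2 * (1 - e ^ 2) + (l / 2) ^ 2) =
            (m + f) ^ 2 * ((m + f) ^ 2 * (1 - e ^ 2)) := by ring_nf; ring_nf at h; linarith
        exact mul_left_cancel₀ (by positivity) h2
      field_simp
      linear_combination -8 * h'
    · intro h
      subst h
      field_simp
      ring
  · intro h
    rw [h]; ring
end

section
/- Let e be a real number with e > 1, and let l, f be positive reals. Set a := m − f and b := a·√(e² − 1) for a real m with m − f > 0. Then the point (m, l/2) lies on the hyperbola x²/a² − y²/b² = 1 (i.e. m²/a² − (l/2)²/b² = 1) if and only if m = l²/(8·f·(e² − 1)) + f/2. Consequently the hyperbola branch of eccentricity e passing through (m, l/2), (m, −l/2) and the vertex (a, 0), with a = m − f, is uniquely determined by e, l and f, with a = l²/(8·f·(e² − 1)) − f/2. -/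
/-! With `b² = a²(e² - 1)`, clearing denominators turns the hyperbola equation at `(m, l/2)` into
`(l/2)² = (e² - 1)(m² - a²)`. For `a = m - f` the difference of squares is `f(2m - f)`, which is
linear in `m`, so `m`, and with it the vertex `a = m - f`, is determined by `e`, `l` and `f`. -/

theorem sq_div_sq_sub_sq_div_mul_sqrt_sq_eq_one_iff {x y a k : ℝ} (ha : a ≠ 0) (hk : 0 < k) :
    x ^ 2 / a ^ 2 - y ^ 2 / (a * Real.sqrt k) ^ 2 = 1 ↔ y ^ 2 = k * (x ^ 2 - a ^ 2) := by
  rw [mul_pow, Real.sq_sqrt hk.le]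
  constructor
  · intro h
    field_simp at h
    linear_combination -h
  · intro h
    field_simp
    linear_combination -h

theorem half_sq_eq_mul_sq_sub_sq_sub_iff {l f m k : ℝ} (hf : f ≠ 0) (hk : k ≠ 0) :
    (l / 2) ^ 2 = k * (m ^ 2 - (m - f) ^ 2) ↔ m = l ^ 2 / (8 * f * k) + f / 2 := by
  have hdiff : m ^ 2 - (m - f) ^ 2 = f * (2 * m - f) := by ring
  rw [hdiff]
  constructor
  · intro h
    field_simp
    linear_combination -8 * h
  · intro h
    rw [h]
    field_simp
    ring

theorem hyperbola_arc_unique_general (e l f m : ℝ) (he : 1 < e)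
    (hf : 0 < f) (ha : 0 < m - f) :
    (m ^ 2 / (m - f) ^ 2 - (l / 2) ^ 2 / ((m - f) * Real.sqrt (e ^ 2 - 1)) ^ 2 = 1 ↔
      m = l ^ 2 / (8 * f * (e ^ 2 - 1)) + f / 2) ∧
    (m = l ^ 2 / (8 * f * (e ^ 2 - 1)) + f / 2 →
      m - f = l ^ 2 / (8 * f * (e ^ 2 - 1)) - f / 2) := by
  have hk : 0 < e ^ 2 - 1 := by nlinarith
  refine ⟨(sq_div_sq_sub_sq_div_mul_sqrt_sq_eq_one_iff ha.ne' hk).trans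
    (half_sq_eq_mul_sq_sub_sq_sub_iff hf.ne' hk.ne'), fun hm => ?_⟩
  rw [hm]
  ring

/-- For `e > 1` and positive `l`, `f`, with `a = m - f > 0` and
`b = a·√(e² - 1)`, the point `(m, l/2)` lies on the hyperbola `x²/a² - y²/b² = 1`
iff `m = l²/(8·f·(e² - 1)) + f/2`; consequently `a = l²/(8·f·(e² - 1)) - f/2`,
so the hyperbola is uniquely determined by `e`, `l`, `f`. -/
theorem hyperbola_arc_unique (e l f m : ℝ) (he : 1 < e)
    (hl : 0 < l) (hf : 0 < f) (ha : 0 < m - f) :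
    (m ^ 2 / (m - f) ^ 2 - (l / 2) ^ 2 / ((m - f) * Real.sqrt (e ^ 2 - 1)) ^ 2 = 1 ↔
      m = l ^ 2 / (8 * f * (e ^ 2 - 1)) + f / 2) ∧
    (m = l ^ 2 / (8 * f * (e ^ 2 - 1)) + f / 2 →
      m - f = l ^ 2 / (8 * f * (e ^ 2 - 1)) - f / 2) :=
  hyperbola_arc_unique_general e l f m he hf ha
end

section
/- Let e ∈ (0,1), let l, f be positive reals with k := l/f satisfying k² > 4·(1 + e)², and set m := l²/(8·f·(1 − e²)) − f/2 and a := m + f. Then (l/2)/(m − e·a) = 4·k·(1 + e)/(k² − 4·(1 + e)²). In particular, the tangent of the half-angle β subtended by the chord of length l at the focus (e·a, 0) of the corresponding ellipse depends only on the eccentricity e and the ratio k. -/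
/-- For an ellipse of eccentricity `e ∈ (0,1)`, chord length `l`,
sagitta `f`, ratio `k = l/f` with `k² > 4(1 + e)²`, `m = l²/(8f(1 - e²)) - f/2`
and `a = m + f`, the tangent of the half-angle subtended by the chord at the focus
`(e·a, 0)` is `(l/2)/(m - e·a) = 4k(1 + e)/(k² - 4(1 + e)²)`, which depends only on
`e` and `k`. -/
theorem ellipse_focus_half_angle_tangent (e l f k m a : ℝ) (he0 : 0 < e) (he1 : e < 1)
    (hl : 0 < l) (hf : 0 < f) (hk : k = l / f) (hk2 : 4 * (1 + e) ^ 2 < k ^ 2)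
    (hm : m = l ^ 2 / (8 * f * (1 - e ^ 2)) - f / 2) (ha : a = m + f) :
    (l / 2) / (m - e * a) = 4 * k * (1 + e) / (k ^ 2 - 4 * (1 + e) ^ 2) := by
  have he1' : (1 : ℝ) - e ^ 2 > 0 := by nlinarith
  have he' : (1 : ℝ) + e > 0 := by linarith
  have hkl : k = l / f := hk
  subst hk hm ha
  have hden : l ^ 2 / (8 * f * (1 - e ^ 2)) - f / 2 -
      e * (l ^ 2 / (8 * f * (1 - e ^ 2)) - f / 2 + f)
      = f * ((l / f) ^ 2 - 4 * (1 + e) ^ 2) / (8 * (1 + e)) := by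
    field_simp
    ring
  rw [hden]
  have hpos : (l / f) ^ 2 - 4 * (1 + e) ^ 2 > 0 := by linarith
  rw [div_eq_div_iff (by positivity) hpos.ne']
  field_simp
  ring
end

section
/- Let e ∈ (0,1), let l₁, l₂, l₃ be positive reals with l₁² = l₂² + l₃², and let k > 0 satisfy k² > 4·(1 − e²). For i = 1, 2, 3 set aᵢ := lᵢ·(k² + 4·(1 − e²))/(8·k·(1 − e²)), bᵢ := aᵢ·√(1 − e²), t₀ := arccos((k² − 4·(1 − e²))/(k² + 4·(1 − e²))), and Cᵢ := ∫_{−t₀}^{t₀} √(aᵢ²·sin²t + bᵢ²·cos²t) dt. Then C₁² = C₂² + C₃². That is, the Pythagorean theorem holds for the lengths of the elliptic arcs of eccentricity e constructed symmetrically on the sides of a right triangle with constant side-to-sagitta ratio k. -/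
/-- Pythagorean theorem for elliptic arcs of eccentricity
`e ∈ (0,1)`: if `l₁² = l₂² + l₃²` and `k > 0` with `k² > 4(1 - e²)`, the elliptic
arc lengths `Cᵢ = ∫_{-t₀}^{t₀} √(aᵢ²·sin²t + bᵢ²·cos²t) dt`, with
`aᵢ = lᵢ·(k² + 4(1 - e²))/(8k(1 - e²))`, `bᵢ = aᵢ·√(1 - e²)` and
`t₀ = arccos((k² - 4(1 - e²))/(k² + 4(1 - e²)))`, satisfy `C₁² = C₂² + C₃²`. -/
theorem pythagoras_elliptic_arcs (e l₁ l₂ l₃ k : ℝ) (he0 : 0 < e) (he1 : e < 1)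
    (h₁ : 0 < l₁) (h₂ : 0 < l₂) (h₃ : 0 < l₃) (hk : 0 < k)
    (hk2 : 4 * (1 - e ^ 2) < k ^ 2) (hpyth : l₁ ^ 2 = l₂ ^ 2 + l₃ ^ 2) :
    ∀ a₁ a₂ a₃ b₁ b₂ b₃ t₀ : ℝ,
      a₁ = l₁ * (k ^ 2 + 4 * (1 - e ^ 2)) / (8 * k * (1 - e ^ 2)) →
      a₂ = l₂ * (k ^ 2 + 4 * (1 - e ^ 2)) / (8 * k * (1 - e ^ 2)) →
      a₃ = l₃ * (k ^ 2 + 4 * (1 - e ^ 2)) / (8 * k * (1 - e ^ 2)) →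
      b₁ = a₁ * Real.sqrt (1 - e ^ 2) → b₂ = a₂ * Real.sqrt (1 - e ^ 2) →
      b₃ = a₃ * Real.sqrt (1 - e ^ 2) →
      t₀ = Real.arccos ((k ^ 2 - 4 * (1 - e ^ 2)) / (k ^ 2 + 4 * (1 - e ^ 2))) →
      (∫ t in (-t₀)..t₀,
          Real.sqrt (a₁ ^ 2 * Real.sin t ^ 2 + b₁ ^ 2 * Real.cos t ^ 2)) ^ 2 =
        (∫ t in (-t₀)..t₀,
            Real.sqrt (a₂ ^ 2 * Real.sin t ^ 2 + b₂ ^ 2 * Real.cos t ^ 2)) ^ 2 +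
        (∫ t in (-t₀)..t₀,
            Real.sqrt (a₃ ^ 2 * Real.sin t ^ 2 + b₃ ^ 2 * Real.cos t ^ 2)) ^ 2 := by
  intro a₁ a₂ a₃ b₁ b₂ b₃ t₀ ha₁ ha₂ ha₃ hb₁ hb₂ hb₃ ht₀
  set c : ℝ := (k ^ 2 + 4 * (1 - e ^ 2)) / (8 * k * (1 - e ^ 2)) with hc
  set J : ℝ := ∫ t in (-t₀)..t₀,
      Real.sqrt (c ^ 2 * Real.sin t ^ 2 + (c * Real.sqrt (1 - e ^ 2)) ^ 2 * Real.cos t ^ 2)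
    with hJ
  have key : ∀ (l a b : ℝ), 0 < l → a = l * c → b = a * Real.sqrt (1 - e ^ 2) →
      (∫ t in (-t₀)..t₀, Real.sqrt (a ^ 2 * Real.sin t ^ 2 + b ^ 2 * Real.cos t ^ 2))
        = l * J := by
    intro l a b hl ha hb
    rw [hJ, ← intervalIntegral.integral_const_mul]
    apply intervalIntegral.integral_congr
    intro t _
    simp only []
    have : a ^ 2 * Real.sin t ^ 2 + b ^ 2 * Real.cos t ^ 2
        = l ^ 2 * (c ^ 2 * Real.sin t ^ 2 + (c * Real.sqrt (1 - e ^ 2)) ^ 2 * Real.cos t ^ 2) := by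
      rw [hb, ha]; ring
    rw [this, Real.sqrt_mul (sq_nonneg l), Real.sqrt_sq hl.le]
  rw [key l₁ a₁ b₁ h₁ (by rw [ha₁, hc]; ring) hb₁,
    key l₂ a₂ b₂ h₂ (by rw [ha₂, hc]; ring) hb₂,
    key l₃ a₃ b₃ h₃ (by rw [ha₃, hc]; ring) hb₃]
  nlinarith [sq_nonneg J]
end

section
/- Let e > 1, let l₁, l₂, l₃ be positive reals with l₁² = l₂² + l₃², and let k > 0 satisfy k² > 4·(e² − 1). For i = 1, 2, 3 set aᵢ := lᵢ·(k² − 4·(e² − 1))/(8·k·(e² − 1)), bᵢ := aᵢ·√(e² − 1), t₀ := arsinh(4·k·√(e² − 1)/(k² − 4·(e² − 1))), and Cᵢ := ∫_{−t₀}^{t₀} √(aᵢ²·sinh²t + bᵢ²·cosh²t) dt. Then C₁² = C₂² + C₃². That is, the Pythagorean theorem holds for the lengths of the hyperbolic arcs of eccentricity e constructed symmetrically on the sides of a right triangle with constant side-to-sagitta ratio k. -/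
/-- Pythagorean theorem for hyperbolic arcs of eccentricity
`e > 1`: if `l₁² = l₂² + l₃²` and `k > 0` with `k² > 4(e² - 1)`, the hyperbolic
arc lengths `Cᵢ = ∫_{-t₀}^{t₀} √(aᵢ²·sinh²t + bᵢ²·cosh²t) dt`, with
`aᵢ = lᵢ·(k² - 4(e² - 1))/(8k(e² - 1))`, `bᵢ = aᵢ·√(e² - 1)` and
`t₀ = arsinh(4k√(e² - 1)/(k² - 4(e² - 1)))`, satisfy `C₁² = C₂² + C₃²`. -/
theorem pythagoras_hyperbolic_arcs (e l₁ l₂ l₃ k : ℝ) (he : 1 < e)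
    (h₁ : 0 < l₁) (h₂ : 0 < l₂) (h₃ : 0 < l₃) (hk : 0 < k)
    (hk2 : 4 * (e ^ 2 - 1) < k ^ 2) (hpyth : l₁ ^ 2 = l₂ ^ 2 + l₃ ^ 2) :
    ∀ a₁ a₂ a₃ b₁ b₂ b₃ t₀ : ℝ,
      a₁ = l₁ * (k ^ 2 - 4 * (e ^ 2 - 1)) / (8 * k * (e ^ 2 - 1)) →
      a₂ = l₂ * (k ^ 2 - 4 * (e ^ 2 - 1)) / (8 * k * (e ^ 2 - 1)) →
      a₃ = l₃ * (k ^ 2 - 4 * (e ^ 2 - 1)) / (8 * k * (e ^ 2 - 1)) →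
      b₁ = a₁ * Real.sqrt (e ^ 2 - 1) → b₂ = a₂ * Real.sqrt (e ^ 2 - 1) →
      b₃ = a₃ * Real.sqrt (e ^ 2 - 1) →
      t₀ = Real.arsinh (4 * k * Real.sqrt (e ^ 2 - 1) / (k ^ 2 - 4 * (e ^ 2 - 1))) →
      (∫ t in (-t₀)..t₀,
          Real.sqrt (a₁ ^ 2 * Real.sinh t ^ 2 + b₁ ^ 2 * Real.cosh t ^ 2)) ^ 2 =
        (∫ t in (-t₀)..t₀,
            Real.sqrt (a₂ ^ 2 * Real.sinh t ^ 2 + b₂ ^ 2 * Real.cosh t ^ 2)) ^ 2 +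
        (∫ t in (-t₀)..t₀,
            Real.sqrt (a₃ ^ 2 * Real.sinh t ^ 2 + b₃ ^ 2 * Real.cosh t ^ 2)) ^ 2 := by
  intro a₁ a₂ a₃ b₁ b₂ b₃ t₀ ha₁ ha₂ ha₃ hb₁ hb₂ hb₃ ht₀
  set m : ℝ := (k ^ 2 - 4 * (e ^ 2 - 1)) / (8 * k * (e ^ 2 - 1)) with hm
  set s : ℝ := Real.sqrt (e ^ 2 - 1) with hs
  have key : ∀ l : ℝ, 0 ≤ l →
      (∫ t in (-t₀)..t₀,
          Real.sqrt ((l * m) ^ 2 * Real.sinh t ^ 2 + (l * m * s) ^ 2 * Real.cosh t ^ 2))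
        = l * ∫ t in (-t₀)..t₀,
            Real.sqrt (m ^ 2 * Real.sinh t ^ 2 + (m * s) ^ 2 * Real.cosh t ^ 2) := by
    intro l hl
    rw [← intervalIntegral.integral_const_mul]
    congr 1
    funext t
    rw [show (l * m) ^ 2 * Real.sinh t ^ 2 + (l * m * s) ^ 2 * Real.cosh t ^ 2
        = l ^ 2 * (m ^ 2 * Real.sinh t ^ 2 + (m * s) ^ 2 * Real.cosh t ^ 2) by ring,
      Real.sqrt_mul (sq_nonneg l), Real.sqrt_sq hl]
  have e₁ : a₁ = l₁ * m := by rw [ha₁, hm, mul_div_assoc]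
  have e₂ : a₂ = l₂ * m := by rw [ha₂, hm, mul_div_assoc]
  have e₃ : a₃ = l₃ * m := by rw [ha₃, hm, mul_div_assoc]
  rw [e₁] at hb₁; rw [e₂] at hb₂; rw [e₃] at hb₃
  rw [e₁, e₂, e₃, hb₁, hb₂, hb₃, show l₁ * m * s = l₁ * (m * s) by ring]
  rw [show l₂ * m * s = l₂ * (m * s) by ring, show l₃ * m * s = l₃ * (m * s) by ring]
  have k1 := key l₁ h₁.le
  have k2 := key l₂ h₂.le
  have k3 := key l₃ h₃.le
  simp only [mul_assoc] at k1 k2 k3 ⊢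
  rw [k1, k2, k3]
  nlinarith [hpyth, sq_nonneg (∫ t in (-t₀)..t₀,
    Real.sqrt (m ^ 2 * Real.sinh t ^ 2 + (m * s) ^ 2 * Real.cosh t ^ 2))]
end

section
/- Let l₂, l₃ be positive reals, set l₁ := √(l₂² + l₃²), let k > 0, and set fᵢ := lᵢ/k for i = 1, 2, 3. Consider the right triangle with vertices P₁ = (0, 0), P₂ = (l₃, 0), P₃ = (0, l₂) (right angle at P₁, hypotenuse of length l₁ opposite P₁). Let P := (l₂²·l₃/(2·l₁²), l₂·l₃²/(2·l₁²)) be the midpoint of the altitude from P₁ to the hypotenuse, and let λ := 1 + 2·l₁²/(k·l₂·l₃). Then the homothety with center P and ratio λ maps: (i) P₁ to the point (−f₂, −f₃), which is the intersection of the lines x = −f₂ and y = −f₃; (ii) P₂ to a point lying on both the line y = −f₃ and the line l₂·x + l₃·y = l₂·l₃ + f₁·l₁; and (iii) P₃ to a point lying on both the line x = −f₂ and the line l₂·x + l₃·y = l₂·l₃ + f₁·l₁. Consequently the image triangle is the enveloping triangle whose sides are parallel to the sides of P₁P₂P₃ at outward distances f₂, f₃ and f₁ respectively, and the 'Pythagorean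 centre' P is the common center of these homotheties for all k > 0. -/
/-- The homothety of the plane `ℝ × ℝ` with center `P` and ratio `lam`. -/
def homothety2 (P : ℝ × ℝ) (lam : ℝ) (Q : ℝ × ℝ) : ℝ × ℝ := P + lam • (Q - P)

/-- The "Pythagorean centre": for the right triangle
`P₁ = (0,0)`, `P₂ = (l₃,0)`, `P₃ = (0,l₂)` with hypotenuse `l₁ = √(l₂² + l₃²)` and
sagittae `fᵢ = lᵢ/k`, the homothety with center `P` (the midpoint of the altitude
from `P₁` to the hypotenuse) and ratio `λ = 1 + 2l₁²/(k·l₂·l₃)` maps `P₁` to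
`(-f₂, -f₃)` and maps `P₂`, `P₃` onto the corresponding sides of the enveloping
triangle, whose sides are parallel to the original sides, displaced outward by
`f₃`, `f₂` and `f₁` respectively. -/
theorem pythagorean_centre (l₂ l₃ k : ℝ) (h₂ : 0 < l₂) (h₃ : 0 < l₃) (hk : 0 < k) :
    ∀ l₁ f₁ f₂ f₃ : ℝ, l₁ = Real.sqrt (l₂ ^ 2 + l₃ ^ 2) →
      f₁ = l₁ / k → f₂ = l₂ / k → f₃ = l₃ / k →
      ∀ P : ℝ × ℝ, P = (l₂ ^ 2 * l₃ / (2 * l₁ ^ 2), l₂ * l₃ ^ 2 / (2 * l₁ ^ 2)) →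
      ∀ lam : ℝ, lam = 1 + 2 * l₁ ^ 2 / (k * l₂ * l₃) →
      -- (i) the image of P₁ = (0,0) is (-f₂, -f₃):
      homothety2 P lam (0, 0) = (-f₂, -f₃) ∧
      -- (ii) the image of P₂ = (l₃, 0) lies on y = -f₃ and on l₂x + l₃y = l₂l₃ + f₁l₁:
      ((homothety2 P lam (l₃, 0)).2 = -f₃ ∧
        l₂ * (homothety2 P lam (l₃, 0)).1 + l₃ * (homothety2 P lam (l₃, 0)).2 =
          l₂ * l₃ + f₁ * l₁) ∧
      -- (iii) the image of P₃ = (0, l₂) lies on x = -f₂ and on l₂x + l₃y = l₂l₃ + f₁l₁: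
      ((homothety2 P lam (0, l₂)).1 = -f₂ ∧
        l₂ * (homothety2 P lam (0, l₂)).1 + l₃ * (homothety2 P lam (0, l₂)).2 =
          l₂ * l₃ + f₁ * l₁) := by
  intro l₁ f₁ f₂ f₃ hl₁ hf₁ hf₂ hf₃ P hP lam hlam
  have hs : 0 < l₂ ^ 2 + l₃ ^ 2 := by positivity
  have hl1sq : l₁ ^ 2 = l₂ ^ 2 + l₃ ^ 2 := by
    rw [hl₁, Real.sq_sqrt hs.le]
  subst hf₁ hf₂ hf₃ hP hlam
  simp only [homothety2, Prod.ext_iff, Prod.fst_add, Prod.snd_add, Prod.fst_sub,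
    Prod.snd_sub, Prod.smul_fst, Prod.smul_snd, smul_eq_mul]
  have h1 : l₁ ≠ 0 := by
    rw [hl₁]; positivity
  have key : l₁ * l₁ = l₂ ^ 2 + l₃ ^ 2 := by rw [← hl1sq]; ring
  refine ⟨⟨?_, ?_⟩, ⟨?_, ?_⟩, ?_, ?_⟩ <;> field_simp <;>
    (try rw [key]) <;> (try rw [hl1sq]) <;> ring
end
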